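/- For any coprime integers e, e' ≥ 2, gcd(2^e + 1, 2^{e'} + 1) divides 3. -/

import Mathlib

/-! If `2^e ≡ 2^e' ≡ -1` modulo `d`, then `2^(2e) ≡ 2^(2e') ≡ 1`, so the order of `2` modulo `d`
divides `gcd(2e, 2e') = 2`; hence `d ∣ 2^2 - 1 = 3`. -/

theorem sq_eq_one_of_pow_eq_neg_one_of_coprime {M : Type*} [Monoid M] [HasDistribNeg M] {x : M}
    {m n : ℕ} (hm : x ^ m = -1) (hn : x ^ n = -1) (hmn : m.Coprime n) : x ^ 2 = 1 := by
  have h2m : x ^ (2 * m) = 1 := by rw [mul_comm, pow_mul, hm, neg_one_sq]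
  have h2n : x ^ (2 * n) = 1 := by rw [mul_comm, pow_mul, hn, neg_one_sq]
  simpa [Nat.gcd_mul_left, hmn] using pow_gcd_eq_one.mpr ⟨h2m, h2n⟩

theorem Nat.gcd_pow_add_one_dvd_sq_sub_one (a : ℕ) {m n : ℕ} (hmn : m.Coprime n) :
    Nat.gcd (a ^ m + 1) (a ^ n + 1) ∣ a ^ 2 - 1 := by
  set d := Nat.gcd (a ^ m + 1) (a ^ n + 1)
  have pow_eq_neg_one {k : ℕ} (hk : d ∣ a ^ k + 1) : (a : ZMod d) ^ k = -1 := by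
    rw [← ZMod.natCast_eq_zero_iff] at hk
    push_cast at hk
    exact eq_neg_of_add_eq_zero_left hk
  have hsq : (a : ZMod d) ^ 2 = 1 :=
    sq_eq_one_of_pow_eq_neg_one_of_coprime (pow_eq_neg_one (Nat.gcd_dvd_left _ _))
      (pow_eq_neg_one (Nat.gcd_dvd_right _ _)) hmn
  have hmod : a ^ 2 % d = 1 % d := by
    rw [← ZMod.natCast_eq_natCast_iff']
    push_cast
    exact hsq
  exact Nat.dvd_of_mod_eq_zero (Nat.sub_mod_eq_zero_of_mod_eq hmod)

theorem gcd_fermat_fermat_dvd_three_general (e e' : ℕ)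
    (hcop : Nat.Coprime e e') :
    Nat.gcd (2 ^ e + 1) (2 ^ e' + 1) ∣ 3 :=
  Nat.gcd_pow_add_one_dvd_sq_sub_one 2 hcop

theorem gcd_fermat_fermat_dvd_three (e e' : ℕ) (he : 2 ≤ e) (he' : 2 ≤ e')
    (hcop : Nat.Coprime e e') :
    Nat.gcd (2 ^ e + 1) (2 ^ e' + 1) ∣ 3 :=
  gcd_fermat_fermat_dvd_three_general e e' hcop
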